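/- arXiv:1905.03077 — 4 statements merged into one kernel-verified Lean document; each statement's English description precedes it below -/
import Mathlib

section
/- Let g = su(2) ⊕ su(2) ⊕ su(2) and define j₊, j₋ : su(2) → g by j₊(X) = (X, -2X, X) and j₋(X) = (-2X, X, X). Let h = {(X,X,X) : X ∈ su(2)} be the diagonal subalgebra and let π : g → V⁺ ⊕ V⁻ be the projection along h, where V± = image of j±. Then for all x, y ∈ su(2): π([j₊(x), j₊(y)]) = -j₊([x,y]), π([j₋(x), j₋(y)]) = -j₋([x,y]), and π([j₊(x), j₋(y)]) = j₊([x,y]) + j₋([x,y]). -/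
open Matrix

/-- 2×2 complex matrices, with the commutator Lie bracket. -/
abbrev M2 := Matrix (Fin 2) (Fin 2) ℂ

/-- g = su(2) ⊕ su(2) ⊕ su(2) (as a subset of M2 × M2 × M2 with componentwise bracket). -/
abbrev G3 := M2 × M2 × M2

def jPlus (X : M2) : G3 := (X, -(2 : ℂ) • X, X)
def jMinus (X : M2) : G3 := (-(2 : ℂ) • X, X, X)

section RingCommutator

variable {A B : Type*}

theorem Prod.ringLie_mk [NonUnitalNonAssocRing A] [NonUnitalNonAssocRing B]
    (a a' : A) (b b' : B) : ⁅(a, b), (a', b')⁆ = (⁅a, a'⁆, ⁅b, b'⁆) := by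
  simp only [Ring.lie_def, Prod.mk_mul_mk, Prod.mk_sub_mk]

variable {R : Type*} [CommSemiring R] [Ring A] [Algebra R A]

theorem Ring.smul_lie (r : R) (x y : A) : ⁅r • x, y⁆ = r • ⁅x, y⁆ := by
  simp only [Ring.lie_def, smul_mul_assoc, mul_smul_comm, smul_sub]

theorem Ring.lie_smul (r : R) (x y : A) : ⁅x, r • y⁆ = r • ⁅x, y⁆ := by
  simp only [Ring.lie_def, smul_mul_assoc, mul_smul_comm, smul_sub]

end RingCommutator

theorem jPlus_lie_jPlus (x y : M2) :
    ⁅jPlus x, jPlus y⁆ = (2 : ℂ) • (⁅x, y⁆, ⁅x, y⁆, ⁅x, y⁆) - jPlus ⁅x, y⁆ := by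
  simp only [jPlus, Prod.ringLie_mk, Ring.smul_lie, Ring.lie_smul, Prod.smul_mk, Prod.mk_sub_mk]
  congr 2 <;> module

theorem jMinus_lie_jMinus (x y : M2) :
    ⁅jMinus x, jMinus y⁆ = (2 : ℂ) • (⁅x, y⁆, ⁅x, y⁆, ⁅x, y⁆) - jMinus ⁅x, y⁆ := by
  simp only [jMinus, Prod.ringLie_mk, Ring.smul_lie, Ring.lie_smul, Prod.smul_mk, Prod.mk_sub_mk]
  congr 2 <;> module

theorem jPlus_lie_jMinus (x y : M2) :
    ⁅jPlus x, jMinus y⁆ = jPlus ⁅x, y⁆ + jMinus ⁅x, y⁆ - (⁅x, y⁆, ⁅x, y⁆, ⁅x, y⁆) := by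
  simp only [jPlus, jMinus, Prod.ringLie_mk, Ring.smul_lie, Ring.lie_smul, Prod.mk_add_mk,
    Prod.mk_sub_mk]
  congr 2 <;> module

theorem stmt1_general (π : G3 →ₗ[ℂ] G3)
    (hker : ∀ X : M2, π (X, X, X) = 0)
    (hplus : ∀ X : M2, π (jPlus X) = jPlus X)
    (hminus : ∀ X : M2, π (jMinus X) = jMinus X)
    (x y : M2) :
    π ⁅jPlus x, jPlus y⁆ = -jPlus ⁅x, y⁆ ∧
    π ⁅jMinus x, jMinus y⁆ = -jMinus ⁅x, y⁆ ∧
    π ⁅jPlus x, jMinus y⁆ = jPlus ⁅x, y⁆ + jMinus ⁅x, y⁆ := by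
  refine ⟨?_, ?_, ?_⟩
  · rw [jPlus_lie_jPlus, map_sub, map_smul, hker, hplus, smul_zero, zero_sub]
  · rw [jMinus_lie_jMinus, map_sub, map_smul, hker, hminus, smul_zero, zero_sub]
  · rw [jPlus_lie_jMinus, map_sub, map_add, hker, hplus, hminus, sub_zero]

/-- For the projection π of su(2)³ onto V⁺ ⊕ V⁻ along the diagonal subalgebra h
(characterized by vanishing on h and fixing V⁺ and V⁻), one has
π([j₊x, j₊y]) = -j₊([x,y]), π([j₋x, j₋y]) = -j₋([x,y]) and
π([j₊x, j₋y]) = j₊([x,y]) + j₋([x,y]) for all x, y ∈ su(2). -/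
theorem stmt1 (π : G3 →ₗ[ℂ] G3)
    (hker : ∀ X : M2, π (X, X, X) = 0)
    (hplus : ∀ X : M2, π (jPlus X) = jPlus X)
    (hminus : ∀ X : M2, π (jMinus X) = jMinus X)
    (x y : M2) (hx : xᴴ = -x) (hx' : x.trace = 0) (hy : yᴴ = -y) (hy' : y.trace = 0) :
    π ⁅jPlus x, jPlus y⁆ = -jPlus ⁅x, y⁆ ∧
    π ⁅jMinus x, jMinus y⁆ = -jMinus ⁅x, y⁆ ∧
    π ⁅jPlus x, jMinus y⁆ = jPlus ⁅x, y⁆ + jMinus ⁅x, y⁆ :=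
  stmt1_general π hker hplus hminus x y
end

section
/- Let λ be a nonzero real number and suppose f₀,…,f₄ : I → ℝ are differentiable functions on an open interval I satisfying the ODEs f₁' = λ f₀⁻³ (f₁(f₁f₂-f₃f₄)/2 - f₃(f₁f₄-f₃²)), f₂' = λ f₀⁻³ (f₄(f₂f₃-f₄²) - f₂(f₁f₂-f₃f₄)/2), f₃' = 6f₀ + λ/(2f₀³)(f₁(f₂f₃-f₄²) - f₄(f₁f₄-f₃²)), f₄' = -6f₀ + λ/(2f₀³)(f₃(f₂f₃-f₄²) - f₂(f₁f₄-f₃²)), f₀' = -3/(2f₀⁴)((f₁+f₃)(f₂f₃-f₄²) - (f₂+f₄)(f₁f₄-f₃²)), with f₀ nowhere zero on I. Then the functions F₁ := f₃ + f₄ + (λ/6)f₀² and F₂ := f₀⁶ - (f₁f₄-f₃²)(f₂f₃-f₄²) + (1/4)(f₁f₂-f₃f₄)² have zero derivative on I; in particular, if F₁ and F₂ vanish at one point of I then they vanish identically on I. -/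
open Set

lemma const_of_deriv0 {f : ℝ → ℝ} {a b : ℝ}
    (H : ∀ t ∈ Ioo a b, HasDerivAt f 0 t) {x y : ℝ}
    (hx : x ∈ Ioo a b) (hy : y ∈ Ioo a b) : f x = f y := by
  apply (convex_Ioo a b).is_const_of_fderivWithin_eq_zero
    (fun t ht => ((H t ht).differentiableAt).differentiableWithinAt)
    (fun t ht => ?_) hx hy
  rw [fderivWithin_of_isOpen isOpen_Ioo ht]
  have : HasFDerivAt f (0 : ℝ →L[ℝ] ℝ) t := by
    rw [show (0 : ℝ →L[ℝ] ℝ) = ContinuousLinearMap.smulRight (1 : ℝ →L[ℝ] ℝ) 0 by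
      ext; simp]
    exact (H t ht).hasFDerivAt
  exact this.fderiv

/-- Along any solution of the invariant nearly parallel G₂ ODE system (1)–(5), the
quantities F₁ = f₃ + f₄ + (λ/6)f₀² and F₂ = f₀⁶ - (f₁f₄-f₃²)(f₂f₃-f₄²) + (1/4)(f₁f₂-f₃f₄)²
have zero derivative; in particular if they vanish at one point they vanish identically. -/
theorem stmt5 (a b lam : ℝ) (hlam : lam ≠ 0) (f0 f1 f2 f3 f4 : ℝ → ℝ)
    (hf0 : ∀ t ∈ Ioo a b, f0 t ≠ 0)
    (h1 : ∀ t ∈ Ioo a b, HasDerivAt f1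
      (lam * (f0 t) ^ (-3 : ℤ) *
        (f1 t * (f1 t * f2 t - f3 t * f4 t) / 2 - f3 t * (f1 t * f4 t - (f3 t) ^ 2))) t)
    (h2 : ∀ t ∈ Ioo a b, HasDerivAt f2
      (lam * (f0 t) ^ (-3 : ℤ) *
        (f4 t * (f2 t * f3 t - (f4 t) ^ 2) - f2 t * (f1 t * f2 t - f3 t * f4 t) / 2)) t)
    (h3 : ∀ t ∈ Ioo a b, HasDerivAt f3
      (6 * f0 t + lam / (2 * (f0 t) ^ 3) *
        (f1 t * (f2 t * f3 t - (f4 t) ^ 2) - f4 t * (f1 t * f4 t - (f3 t) ^ 2))) t)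
    (h4 : ∀ t ∈ Ioo a b, HasDerivAt f4
      (-(6 * f0 t) + lam / (2 * (f0 t) ^ 3) *
        (f3 t * (f2 t * f3 t - (f4 t) ^ 2) - f2 t * (f1 t * f4 t - (f3 t) ^ 2))) t)
    (h0 : ∀ t ∈ Ioo a b, HasDerivAt f0
      (-(3 / (2 * (f0 t) ^ 4)) *
        ((f1 t + f3 t) * (f2 t * f3 t - (f4 t) ^ 2)
          - (f2 t + f4 t) * (f1 t * f4 t - (f3 t) ^ 2))) t) :
    (∀ t ∈ Ioo a b,
      HasDerivAt (fun s => f3 s + f4 s + (lam / 6) * (f0 s) ^ 2) 0 t) ∧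
    (∀ t ∈ Ioo a b,
      HasDerivAt (fun s => (f0 s) ^ 6
        - (f1 s * f4 s - (f3 s) ^ 2) * (f2 s * f3 s - (f4 s) ^ 2)
        + (1 / 4) * (f1 s * f2 s - f3 s * f4 s) ^ 2) 0 t) ∧
    (∀ t0 ∈ Ioo a b,
      (f3 t0 + f4 t0 + (lam / 6) * (f0 t0) ^ 2 = 0 ∧
        (f0 t0) ^ 6 - (f1 t0 * f4 t0 - (f3 t0) ^ 2) * (f2 t0 * f3 t0 - (f4 t0) ^ 2)
          + (1 / 4) * (f1 t0 * f2 t0 - f3 t0 * f4 t0) ^ 2 = 0) →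
      ∀ t ∈ Ioo a b,
        f3 t + f4 t + (lam / 6) * (f0 t) ^ 2 = 0 ∧
        (f0 t) ^ 6 - (f1 t * f4 t - (f3 t) ^ 2) * (f2 t * f3 t - (f4 t) ^ 2)
          + (1 / 4) * (f1 t * f2 t - f3 t * f4 t) ^ 2 = 0) := by
  have H1 : ∀ t ∈ Ioo a b,
      HasDerivAt (fun s => f3 s + f4 s + (lam / 6) * (f0 s) ^ 2) 0 t := by
    intro t ht
    have h0' := (((h0 t ht).pow 2).const_mul (lam / 6))
    have := ((h3 t ht).add (h4 t ht)).add h0'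
    refine this.congr_deriv ?_
    have hne := hf0 t ht
    field_simp
    ring
  have H2 : ∀ t ∈ Ioo a b,
      HasDerivAt (fun s => (f0 s) ^ 6
        - (f1 s * f4 s - (f3 s) ^ 2) * (f2 s * f3 s - (f4 s) ^ 2)
        + (1 / 4) * (f1 s * f2 s - f3 s * f4 s) ^ 2) 0 t := by
    intro t ht
    have hB := ((h1 t ht).mul (h4 t ht)).sub ((h3 t ht).pow 2)
    have hA := ((h2 t ht).mul (h3 t ht)).sub ((h4 t ht).pow 2)
    have hC := ((h1 t ht).mul (h2 t ht)).sub ((h3 t ht).mul (h4 t ht))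
    have := (((h0 t ht).pow 6).sub (hB.mul hA)).add ((hC.pow 2).const_mul (1/4))
    refine this.congr_deriv ?_
    have hne := hf0 t ht
    simp only [Pi.sub_apply, Pi.mul_apply, Pi.pow_apply]
    field_simp
    ring
  refine ⟨H1, H2, ?_⟩
  intro t0 ht0 ⟨e1, e2⟩ t ht
  exact ⟨(const_of_deriv0 H1 ht ht0).trans e1, (const_of_deriv0 H2 ht ht0).trans e2⟩
end

section
/- The functions f₀(t) = -9 sin t cos t, f₁(t) = 27 sin⁴t, f₂(t) = 27 cos⁴t, f₃(t) = f₄(t) = -27 sin²t cos²t satisfy, with λ = 4 and for all t ∈ (0, π/2), both differential equations f₁' = λ f₀⁻³ (f₁(f₁f₂-f₃f₄)/2 - f₃(f₁f₄-f₃²)) and f₃' = 6f₀ + λ/(2f₀³)(f₁(f₂f₃-f₄²) - f₄(f₁f₄-f₃²)), as well as the algebraic relations f₃ + f₄ + (λ/6)f₀² = 0 and f₀⁶ = (f₁f₄-f₃²)(f₂f₃-f₄²) - (1/4)(f₁f₂-f₃f₄)². -/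
open Real Set

noncomputable def rs0 : ℝ → ℝ := fun t => -9 * sin t * cos t
noncomputable def rs1 : ℝ → ℝ := fun t => 27 * (sin t) ^ 4
noncomputable def rs2 : ℝ → ℝ := fun t => 27 * (cos t) ^ 4
noncomputable def rs3 : ℝ → ℝ := fun t => -27 * (sin t) ^ 2 * (cos t) ^ 2
noncomputable def rs4 : ℝ → ℝ := fun t => -27 * (sin t) ^ 2 * (cos t) ^ 2

/-- The round-sphere solution (λ = 4) satisfies equations (1), (3) and the algebraic
constraints of the invariant nearly parallel G₂ system on (0, π/2). -/
theorem stmt7 :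
    ∀ t ∈ Ioo (0 : ℝ) (π / 2),
      HasDerivAt rs1
        (4 * (rs0 t) ^ (-3 : ℤ) *
          (rs1 t * (rs1 t * rs2 t - rs3 t * rs4 t) / 2
            - rs3 t * (rs1 t * rs4 t - (rs3 t) ^ 2))) t ∧
      HasDerivAt rs3
        (6 * rs0 t + 4 / (2 * (rs0 t) ^ 3) *
          (rs1 t * (rs2 t * rs3 t - (rs4 t) ^ 2)
            - rs4 t * (rs1 t * rs4 t - (rs3 t) ^ 2))) t ∧
      rs3 t + rs4 t + ((4 : ℝ) / 6) * (rs0 t) ^ 2 = 0 ∧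
      (rs0 t) ^ 6 = (rs1 t * rs4 t - (rs3 t) ^ 2) * (rs2 t * rs3 t - (rs4 t) ^ 2)
        - (1 / 4) * (rs1 t * rs2 t - rs3 t * rs4 t) ^ 2 := by
  intro t ht
  obtain ⟨ht0, ht2⟩ := ht
  have hs : 0 < sin t := sin_pos_of_pos_of_lt_pi ht0 (by linarith [pi_pos])
  have hc : 0 < cos t := cos_pos_of_mem_Ioo ⟨by linarith [pi_pos], ht2⟩
  have hs' : sin t ≠ 0 := ne_of_gt hs
  have hc' : cos t ≠ 0 := ne_of_gt hc
  have hpyth : sin t ^ 2 + cos t ^ 2 = 1 := sin_sq_add_cos_sq t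
  refine ⟨?_, ?_, ?_, ?_⟩
  · have h : HasDerivAt rs1 (108 * sin t ^ 3 * cos t) t := by
      have h1 := ((hasDerivAt_sin t).pow 4).const_mul (27 : ℝ)
      refine (h1.congr_deriv ?_).congr_of_eventuallyEq (Filter.Eventually.of_forall fun x => ?_)
      · norm_num; ring
      · simp [rs1]
    convert h using 1
    simp only [rs0, rs1, rs2, rs3, rs4, zpow_neg, zpow_ofNat]
    field_simp
    linear_combination 157464 * hpyth
  · have h : HasDerivAt rs3 (-54 * sin t * cos t ^ 3 + 54 * sin t ^ 3 * cos t) t := by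
      have h1 := (((hasDerivAt_sin t).pow 2).mul ((hasDerivAt_cos t).pow 2)).const_mul (-27 : ℝ)
      refine (h1.congr_deriv ?_).congr_of_eventuallyEq (Filter.Eventually.of_forall fun x => ?_)
      · norm_num; ring
      · simp [rs3]; ring
    convert h using 1
    simp only [rs0, rs1, rs2, rs3, rs4]
    field_simp
    linear_combination (78732 * (2 * sin t ^ 2 + 1)) * hpyth
  · simp only [rs0, rs3, rs4]; ring
  · simp only [rs0, rs1, rs2, rs3, rs4]
    linear_combination (-531441 * sin t ^ 6 * cos t ^ 6 * (sin t ^ 2 + cos t ^ 2 + 1)) * hpyth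
end

section
/- Let a ≠ 0 and λ ∈ ℝ, and let M be the 4×4 real matrix [[-5, 0, -27a⁻², 2/3], [-81λ/a, -4, 0, 27λ/a], [0, 0, 0, 0], [6, 0, 0, -2]]. Then for every integer l ≥ 1, det(M - l·Id) = l(l+4)(l² + 7l + 6), which is strictly positive; in particular M - l·Id is invertible for all positive integers l. -/
open Matrix

/-- For the differential dA at the initial point, det(dA - l·Id) = l(l+4)(l²+7l+6) > 0
for every integer l ≥ 1; in particular dA - l·Id is invertible. -/
theorem stmt15 (a lam : ℝ) (ha : a ≠ 0) :
    ∀ l : ℕ, 1 ≤ l →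
      ((!![-5, 0, -27 / a ^ 2, 2 / 3;
           -81 * lam / a, -4, 0, 27 * lam / a;
           0, 0, 0, 0;
           6, 0, 0, -2] : Matrix (Fin 4) (Fin 4) ℝ)
          - (l : ℝ) • (1 : Matrix (Fin 4) (Fin 4) ℝ)).det =
        (l : ℝ) * ((l : ℝ) + 4) * ((l : ℝ) ^ 2 + 7 * (l : ℝ) + 6) ∧
      0 < (l : ℝ) * ((l : ℝ) + 4) * ((l : ℝ) ^ 2 + 7 * (l : ℝ) + 6) ∧
      IsUnit ((!![-5, 0, -27 / a ^ 2, 2 / 3;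
           -81 * lam / a, -4, 0, 27 * lam / a;
           0, 0, 0, 0;
           6, 0, 0, -2] : Matrix (Fin 4) (Fin 4) ℝ)
          - (l : ℝ) • (1 : Matrix (Fin 4) (Fin 4) ℝ)) := by
  intro l hl
  have hl1 : (1 : ℝ) ≤ (l : ℝ) := by exact_mod_cast hl
  have hdet : ((!![-5, 0, -27 / a ^ 2, 2 / 3;
           -81 * lam / a, -4, 0, 27 * lam / a;
           0, 0, 0, 0;
           6, 0, 0, -2] : Matrix (Fin 4) (Fin 4) ℝ)
          - (l : ℝ) • (1 : Matrix (Fin 4) (Fin 4) ℝ)).det =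
        (l : ℝ) * ((l : ℝ) + 4) * ((l : ℝ) ^ 2 + 7 * (l : ℝ) + 6) := by
    have hM : ((!![-5, 0, -27 / a ^ 2, 2 / 3;
           -81 * lam / a, -4, 0, 27 * lam / a;
           0, 0, 0, 0;
           6, 0, 0, -2] : Matrix (Fin 4) (Fin 4) ℝ)
          - (l : ℝ) • (1 : Matrix (Fin 4) (Fin 4) ℝ)) =
        !![-5 - (l : ℝ), 0, -27 / a ^ 2, 2 / 3;
           -81 * lam / a, -4 - (l : ℝ), 0, 27 * lam / a;
           0, 0, -(l : ℝ), 0;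
           6, 0, 0, -2 - (l : ℝ)] := by
      ext i j
      fin_cases i <;> fin_cases j <;>
        simp [Matrix.sub_apply, Matrix.smul_apply, Matrix.one_apply, Matrix.vecHead, Matrix.vecTail] <;> ring
    rw [hM]
    simp [Matrix.det_succ_row_zero, Fin.sum_univ_succ,
      show (Fin.succAbove 2 2 : Fin 4) = 3 from rfl,
      show (Fin.castSucc 2 : Fin 4) = 2 from rfl,
      show (Fin.succAbove 3 2 : Fin 4) = 2 from rfl]
    ring
  have hpos : 0 < (l : ℝ) * ((l : ℝ) + 4) * ((l : ℝ) ^ 2 + 7 * (l : ℝ) + 6) := by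
    nlinarith
  refine ⟨hdet, hpos, ?_⟩
  rw [Matrix.isUnit_iff_isUnit_det, hdet]
  exact (isUnit_iff_ne_zero).2 (ne_of_gt hpos)
end
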